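/- If G is a permutation graph on n vertices, then its threshold dimension satisfies t(G) ≤ n/2, i.e., 2·t(G) ≤ n. -/

import Mathlib

/-- The permutation graph `G[Π]` on `Fin n`: `i ~ j` iff `(i-j)(Π⁻¹ i - Π⁻¹ j) < 0`. -/
def permGraph (n : ℕ) (π : Equiv.Perm (Fin n)) : SimpleGraph (Fin n) where
  Adj i j := ((i : ℤ) - (j : ℤ)) * ((π.symm i : ℤ) - ((π.symm j : ℤ))) < 0
  symm := by
    constructor
    intro i j h
    have e : ((j : ℤ) - (i : ℤ)) * ((π.symm j : ℤ) - (π.symm i : ℤ))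
        = ((i : ℤ) - (j : ℤ)) * ((π.symm i : ℤ) - (π.symm j : ℤ)) := by ring
    simp only [e]
    exact h
  loopless := by constructor; intro i; simp

/-- A set of vertices is stable (independent) if no two of its members are adjacent. -/
def IsStableSet {V : Type*} (G : SimpleGraph V) (s : Set V) : Prop :=
  s.Pairwise fun a b => ¬ G.Adj a b

/-- A finite graph is a threshold graph if there are nonnegative vertex weights and a
threshold `t` such that a set of vertices is stable iff its total weight is at most `t`. -/
def IsThresholdGraph {V : Type*} [Fintype V] (G : SimpleGraph V) : Prop :=
  ∃ (w : V → ℝ) (t : ℝ), (∀ v, 0 ≤ w v) ∧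
    ∀ U : Finset V, ((∑ v ∈ U, w v) ≤ t ↔ IsStableSet G ↑U)

/-- A graph is a permutation graph if it is isomorphic to `permGraph n π` for some
permutation `π` of `Fin n`. -/
def IsPermutationGraph {V : Type*} (G : SimpleGraph V) : Prop :=
  ∃ (n : ℕ) (π : Equiv.Perm (Fin n)), Nonempty (G ≃g permGraph n π)

/-- The threshold dimension of `G`: the least `k` such that the edge set of `G` is the
union of the edge sets of `k` threshold graphs on `V(G)`. -/
noncomputable def thresholdDim {V : Type*} [Fintype V] (G : SimpleGraph V) : ℕ :=
  sInf {k | ∃ T : Fin k → SimpleGraph V,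
    (∀ i, IsThresholdGraph (T i)) ∧ (⋃ i, (T i).edgeSet) = G.edgeSet}

/-- The independence number `α(G)`. -/
noncomputable def alphaNum {V : Type*} [Fintype V] (G : SimpleGraph V) : ℕ :=
  sSup {k | ∃ s : Finset V, s.card = k ∧ IsStableSet G ↑s}

/-- The graph `mK₂`: a perfect matching on `2m` vertices. -/
def matchingGraph (m : ℕ) : SimpleGraph (Fin m × Bool) where
  Adj a b := a.1 = b.1 ∧ a.2 ≠ b.2
  symm := by constructor; rintro a b ⟨h1, h2⟩; exact ⟨h1.symm, h2.symm⟩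
  loopless := by constructor; rintro a ⟨h1, h2⟩; exact h2 rfl
/-!
Non-adjacency in `G[Π]` is comparability in the dominance order `(x, Π⁻¹ x) ≤ (y, Π⁻¹ y)`, so by
Mirsky's theorem the vertices split into `k` cliques `L` (height levels) while a longest chain is a
stable set of `k` vertices. The `n - k` stars centred off that stable set cover every edge. So do the
`k` graphs `T_L` keeping the edges whose smaller endpoint lies in `L`: `T_L` is a split graph with
clique `L`, and since `x < y ∧ x ~ y` is a transitive relation, the neighbourhoods in `L` of the
other vertices are initial segments of `L`, hence nested, which makes `T_L` a threshold graph.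
Hence `t(G) ≤ min (k, n - k) ≤ n / 2`.
-/

open Finset

theorem sum_pow_lt_pow_of_card_le {ι : Type*} {s : Finset ι} {d : ι → ℕ} {N m : ℕ} (hs : #s ≤ N)
    (hd : ∀ i ∈ s, d i < m) : ∑ i ∈ s, ((N : ℝ) + 1) ^ d i < ((N : ℝ) + 1) ^ m := by
  rcases m with _ | m
  · simp [eq_empty_of_forall_notMem fun i hi => Nat.not_lt_zero _ (hd i hi)]
  calc ∑ i ∈ s, ((N : ℝ) + 1) ^ d i ≤ #s • ((N : ℝ) + 1) ^ m :=
        sum_le_card_nsmul _ _ _ fun i hi =>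
          pow_le_pow_right₀ (by linarith [N.cast_nonneg (α := ℝ)]) (Nat.lt_succ_iff.mp (hd i hi))
    _ ≤ N * ((N : ℝ) + 1) ^ m := by rw [nsmul_eq_mul]; gcongr
    _ < ((N : ℝ) + 1) ^ (m + 1) := by rw [pow_succ']; gcongr; linarith

/-- Mirsky's theorem: the fibres of `f` (the height levels) are `k` antichains. -/
theorem exists_strictMono_fin_and_isChain_card_eq (α : Type*) [PartialOrder α] [Fintype α] :
    ∃ (k : ℕ) (f : α → Fin k) (s : Finset α),
      StrictMono f ∧ IsChain (· ≤ ·) (s : Set α) ∧ #s = k := by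
  cases isEmpty_or_nonempty α
  · exact ⟨0, isEmptyElim, ∅, fun x => isEmptyElim x, by simp⟩
  have hfin : ∀ x : α, Order.height x ≠ ⊤ := fun x =>
    (lt_of_le_of_lt (Order.height_le fun p _ => by exact_mod_cast p.length_lt_card.le)
      (ENat.natCast_lt_top _)).ne
  obtain ⟨x₀, hx₀⟩ := Finite.exists_max (Order.height (α := α))
  obtain ⟨p, -, hp⟩ := Order.exists_series_of_height_eq_coe x₀ (ENat.natCast_toNat (hfin x₀)).symm
  refine ⟨p.length + 1, fun x => ⟨(Order.height x).toNat, ?_⟩, univ.map ⟨p, p.strictMono.injective⟩,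
    fun x y hxy => ?_, ?_, by simp⟩
  · rw [hp, Nat.lt_succ_iff]
    exact ENat.toNat_le_toNat (hx₀ x) (hfin x₀)
  · have := Order.height_strictMono hxy (hfin x).lt_top
    rwa [← ENat.natCast_toNat (hfin x), ← ENat.natCast_toNat (hfin y), Nat.cast_lt] at this
  · rw [coe_map, coe_univ, Set.image_univ]
    exact p.strictMono.monotone.isChain_range

namespace SimpleGraph

variable {V : Type*}

section Threshold

variable [Fintype V] {H : SimpleGraph V}

theorem isThresholdGraph_of_weights (w : V → ℝ) (t : ℝ) (hw : ∀ v, 0 ≤ w v)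
    (hadj : ∀ x y, H.Adj x y → t < w x + w y)
    (hstable : ∀ U : Finset V, IsStableSet H ↑U → ∑ v ∈ U, w v ≤ t) :
    IsThresholdGraph H := by
  refine ⟨w, t, hw, fun U => ⟨fun hU x hx y hy hxy hxy' => ?_, hstable U⟩⟩
  have := add_le_sum (fun v _ => hw v) hx hy hxy
  linarith [hadj x y hxy']

theorem ncard_neighborSet_lt_of_nested {K : Set V}
    (hnest : ∀ x ∉ K, ∀ y ∉ K, H.neighborSet x ⊆ H.neighborSet y ∨
      H.neighborSet y ⊆ H.neighborSet x)
    {e x y : V} (hx : x ∉ K) (hy : y ∉ K) (hex : H.Adj x e) (hey : ¬ H.Adj y e) :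
    (H.neighborSet y).ncard < (H.neighborSet x).ncard := by
  refine Set.ncard_lt_ncard (Set.ssubset_iff_subset_ne.mpr ⟨?_, fun h => hey ?_⟩)
  · exact (hnest x hx y hy).resolve_left fun h => hey (h hex)
  · rw [← mem_neighborSet, h]; exact hex

theorem isThresholdGraph_of_dominating_weights {K : Set V} (hK : H.IsClique K)
    (hKc : IsStableSet H Kᶜ) (b : V → ℝ) (hb : ∀ x, 0 ≤ b x)
    (hdom : ∀ e ∈ K, ∀ x ∉ K, H.Adj e x → ∀ s : Finset V,
      (∀ y ∈ s, y ∉ K ∧ ¬ H.Adj e y) → ∑ y ∈ s, b y < b x) :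
    IsThresholdGraph H := by
  classical
  set M : V → Finset V := fun e => {y | y ∉ K ∧ ¬ H.Adj e y}
  set S := ∑ y, b y
  have hS : 0 ≤ S := sum_nonneg fun y _ => hb y
  have hMS : ∀ e, ∑ y ∈ M e, b y ≤ S := fun e => sum_le_univ_sum_of_nonneg hb
  set t := 2 * S + 1
  -- `e ∈ K` gets exactly the slack left by its non-neighbours, so stable sets through `e` fit
  set w : V → ℝ := fun x => if x ∈ K then t - ∑ y ∈ M x, b y else b x
  have hw : ∀ x, 0 ≤ w x := fun x => by
    by_cases hx : x ∈ K <;> simp only [w, hx, if_true, if_false]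
    · linarith [hMS x]
    · exact hb x
  have hcross : ∀ e x, e ∈ K → x ∉ K → H.Adj e x → t < w e + w x := by
    intro e x he hx hex
    have := hdom e he x hx hex (M e) fun y hy => by simpa [M] using hy
    simp only [w, he, hx, if_true, if_false]
    linarith
  refine isThresholdGraph_of_weights w t hw (fun x y hxy => ?_) fun U hU => ?_
  · by_cases hx : x ∈ K <;> by_cases hy : y ∈ K
    · simp only [w, hx, hy, if_true]
      linarith [hMS x, hMS y]
    · exact hcross x y hx hy hxy
    · linarith [hcross y x hy hx hxy.symm]
    · exact absurd hxy (hKc hx hy hxy.ne)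
  by_cases hUK : ∃ e ∈ U, e ∈ K
  · obtain ⟨e, heU, heK⟩ := hUK
    have hsub : U.erase e ⊆ M e := fun y hy => by
      obtain ⟨hye, hyU⟩ := mem_erase.mp hy
      have hey : ¬ H.Adj e y := hU heU hyU hye.symm
      simp only [M, mem_filter, mem_univ, true_and]
      exact ⟨fun hyK => hey (hK heK hyK hye.symm), hey⟩
    have hrest : ∀ y ∈ U.erase e, w y = b y := fun y hy => by
      simp only [w, ((mem_filter.mp (hsub hy)).2.1), if_false]
    rw [← add_sum_erase U w heU, sum_congr rfl hrest]
    have := sum_le_sum_of_subset_of_nonneg hsub fun y _ _ => hb y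
    simp only [w, heK, if_true]
    linarith
  · push Not at hUK
    have hrest : ∀ y ∈ U, w y = b y := fun y hy => by simp only [w, hUK y hy, if_false]
    rw [sum_congr rfl hrest]
    linarith [sum_le_univ_sum_of_nonneg (s := U) hb]

theorem isThresholdGraph_of_nested {K : Set V} (hK : H.IsClique K) (hKc : IsStableSet H Kᶜ)
    (hnest : ∀ x ∉ K, ∀ y ∉ K, H.neighborSet x ⊆ H.neighborSet y ∨
      H.neighborSet y ⊆ H.neighborSet x) :
    IsThresholdGraph H := by
  refine isThresholdGraph_of_dominating_weights hK hKc
    (fun x => ((Fintype.card V : ℝ) + 1) ^ (H.neighborSet x).ncard) (fun x => by positivity)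
    fun e _ x hx hex s hs => sum_pow_lt_pow_of_card_le (card_le_univ s) fun y hy => ?_
  exact ncard_neighborSet_lt_of_nested hnest hx (hs y hy).1 hex.symm fun h => (hs y hy).2 h.symm

theorem _root_.IsThresholdGraph.comap {W : Type*} [Fintype W] {H : SimpleGraph W}
    (h : IsThresholdGraph H) (f : V ≃ W) : IsThresholdGraph (H.comap f) := by
  classical
  obtain ⟨w, t, hw, hiff⟩ := h
  refine ⟨w ∘ f, t, fun v => hw (f v), fun U => ?_⟩
  have hU := hiff (U.map f.toEmbedding)
  rw [sum_map, IsStableSet, coe_map, f.toEmbedding.injective.injOn.pairwise_image] at hU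
  exact hU

end Threshold

section Cover

variable [Fintype V]

theorem exists_fin_thresholdCover_of_iSup_eq {ι : Type*} [Fintype ι] {G : SimpleGraph V}
    (T : ι → SimpleGraph V) (hT : ∀ i, IsThresholdGraph (T i)) (hG : ⨆ i, T i = G) :
    ∃ T' : Fin (Fintype.card ι) → SimpleGraph V,
      (∀ i, IsThresholdGraph (T' i)) ∧ (⋃ i, (T' i).edgeSet) = G.edgeSet := by
  refine ⟨T ∘ (Fintype.equivFin ι).symm, fun i => hT _, ?_⟩
  rw [← hG, edgeSet_iSup]
  exact (Fintype.equivFin ι).symm.iSup_comp (g := fun i => (T i).edgeSet)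

theorem thresholdDim_le_of_iSup_eq {ι : Type*} [Fintype ι] {G : SimpleGraph V}
    (T : ι → SimpleGraph V) (hT : ∀ i, IsThresholdGraph (T i)) (hG : ⨆ i, T i = G) :
    thresholdDim G ≤ Fintype.card ι :=
  Nat.sInf_le (exists_fin_thresholdCover_of_iSup_eq T hT hG)

end Cover

section Star

def starAt (G : SimpleGraph V) (c : V) : SimpleGraph V where
  Adj x y := G.Adj x y ∧ (x = c ∨ y = c)
  symm := ⟨fun _ _ h => ⟨h.1.symm, h.2.symm⟩⟩
  loopless := ⟨fun _ h => G.irrefl h.1⟩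

@[simp]
theorem starAt_adj {G : SimpleGraph V} {c x y : V} :
    (G.starAt c).Adj x y ↔ G.Adj x y ∧ (x = c ∨ y = c) :=
  Iff.rfl

variable [Fintype V]

theorem isThresholdGraph_starAt (G : SimpleGraph V) (c : V) : IsThresholdGraph (G.starAt c) := by
  have hsub : ∀ x ≠ c, (G.starAt c).neighborSet x ⊆ {c} := fun x hx y hy =>
    hy.2.resolve_left hx
  refine isThresholdGraph_of_nested (K := {c}) (isClique_singleton c)
    (fun x hx y hy _ h => h.2.elim hx hy) fun x hx y hy => ?_
  rcases Set.subset_singleton_iff_eq.mp (hsub x hx) with h | h <;> simp [h, hsub y hy]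

theorem iSup_starAt_eq [DecidableEq V] {G : SimpleGraph V} {S : Finset V}
    (hS : IsStableSet G ↑S) : ⨆ c : ↥Sᶜ, G.starAt c = G := by
  ext x y
  simp only [iSup_adj, starAt_adj, Subtype.exists, mem_compl, exists_prop]
  refine ⟨fun ⟨_, _, h, _⟩ => h, fun h => ?_⟩
  by_cases hx : x ∈ S
  · exact ⟨y, fun hy => hS hx hy h.ne h, h, Or.inr rfl⟩
  · exact ⟨x, hx, h, Or.inl rfl⟩

theorem thresholdDim_le_card_sub_card {G : SimpleGraph V} (S : Finset V) (hS : IsStableSet G ↑S) :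
    thresholdDim G ≤ Fintype.card V - #S := by
  classical
  simpa [card_compl] using
    thresholdDim_le_of_iSup_eq (fun c : ↥Sᶜ => G.starAt c) (fun c => isThresholdGraph_starAt G c)
      (iSup_starAt_eq hS)

theorem exists_thresholdCover (G : SimpleGraph V) :
    ∃ T : Fin (thresholdDim G) → SimpleGraph V, (∀ i, IsThresholdGraph (T i)) ∧ ⨆ i, T i = G := by
  classical
  obtain ⟨T, hT, hG⟩ := Nat.sInf_mem (s := {k | ∃ T : Fin k → SimpleGraph V,
    (∀ i, IsThresholdGraph (T i)) ∧ (⋃ i, (T i).edgeSet) = G.edgeSet})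
    ⟨_, exists_fin_thresholdCover_of_iSup_eq (fun c : ↥(∅ : Finset V)ᶜ => G.starAt c)
      (fun c => isThresholdGraph_starAt G c) (iSup_starAt_eq (by simp [IsStableSet]))⟩
  exact ⟨T, hT, edgeSet_injective (edgeSet_iSup.trans hG)⟩

theorem thresholdDim_le_of_iso {W : Type*} [Fintype W] {G : SimpleGraph V} {H : SimpleGraph W}
    (e : G ≃g H) : thresholdDim G ≤ thresholdDim H := by
  obtain ⟨T, hT, hH⟩ := exists_thresholdCover H
  simpa using thresholdDim_le_of_iSup_eq (fun i => (T i).comap e)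
    (fun i => (hT i).comap e.toEquiv) (by ext x y; simp [← e.map_adj_iff, ← hH, iSup_adj])

end Star

section MinEndpoint

variable [LinearOrder V]

def edgesWithMinIn (G : SimpleGraph V) (L : Set V) : SimpleGraph V where
  Adj x y := G.Adj x y ∧ min x y ∈ L
  symm := ⟨fun x y h => ⟨h.1.symm, min_comm x y ▸ h.2⟩⟩
  loopless := ⟨fun _ h => G.irrefl h.1⟩

@[simp]
theorem edgesWithMinIn_adj {G : SimpleGraph V} {L : Set V} {x y : V} :
    (G.edgesWithMinIn L).Adj x y ↔ G.Adj x y ∧ min x y ∈ L :=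
  Iff.rfl

theorem iSup_edgesWithMinIn_fiber {ι : Type*} (G : SimpleGraph V) (f : V → ι) :
    ⨆ i, G.edgesWithMinIn (f ⁻¹' {i}) = G := by
  ext x y
  simp [iSup_adj]

variable {G : SimpleGraph V} {L : Set V}

theorem mem_of_mem_neighborSet_edgesWithMinIn {x e : V} (hx : x ∉ L)
    (he : e ∈ (G.edgesWithMinIn L).neighborSet x) : e ∈ L :=
  (min_choice x e).elim (fun h => absurd (h ▸ he.2) hx) fun h => h ▸ he.2

theorem mem_neighborSet_edgesWithMinIn_of_lt
    (htrans : ∀ ⦃x y z⦄, x < y → y < z → G.Adj x y → G.Adj y z → G.Adj x z)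
    (hL : G.IsClique L) {x e f : V} (hx : x ∉ L) (he : e ∈ L) (hef : e < f)
    (hf : f ∈ (G.edgesWithMinIn L).neighborSet x) :
    e ∈ (G.edgesWithMinIn L).neighborSet x := by
  have hfL := mem_of_mem_neighborSet_edgesWithMinIn hx hf
  obtain ⟨hxf, hmin⟩ := hf
  have hfx : f < x := (lt_or_gt_of_ne hxf.ne).resolve_left fun h => hx (min_eq_left h.le ▸ hmin)
  have hex := htrans hef hfx (hL he hfL hef.ne) hxf.symm
  exact ⟨hex.symm, (min_eq_right (hef.trans hfx).le).symm ▸ he⟩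

theorem isThresholdGraph_edgesWithMinIn [Fintype V]
    (htrans : ∀ ⦃x y z⦄, x < y → y < z → G.Adj x y → G.Adj y z → G.Adj x z)
    (hL : G.IsClique L) : IsThresholdGraph (G.edgesWithMinIn L) := by
  refine isThresholdGraph_of_nested (K := L) (fun x hx y hy hxy => ⟨hL hx hy hxy, ?_⟩)
    (fun x hx y hy _ h => ?_) fun x hx y hy => ?_
  · rcases min_choice x y with h | h <;> rw [h] <;> assumption
  · exact (min_choice x y).elim (fun h' => hx (h' ▸ h.2)) fun h' => hy (h' ▸ h.2)
  by_contra! h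
  obtain ⟨e, hex, hey⟩ := Set.not_subset.mp h.1
  obtain ⟨f, hfy, hfx⟩ := Set.not_subset.mp h.2
  have heL := mem_of_mem_neighborSet_edgesWithMinIn hx hex
  have hfL := mem_of_mem_neighborSet_edgesWithMinIn hy hfy
  rcases lt_trichotomy e f with hef | rfl | hfe
  · exact hey (mem_neighborSet_edgesWithMinIn_of_lt htrans hL hy heL hef hfy)
  · exact hey hfy
  · exact hfx (mem_neighborSet_edgesWithMinIn_of_lt htrans hL hx hfL hfe hex)

theorem thresholdDim_le_card_of_isClique_fiber [Fintype V] {ι : Type*} [Fintype ι]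
    (htrans : ∀ ⦃x y z⦄, x < y → y < z → G.Adj x y → G.Adj y z → G.Adj x z)
    (f : V → ι) (hf : ∀ i, G.IsClique (f ⁻¹' {i})) : thresholdDim G ≤ Fintype.card ι :=
  thresholdDim_le_of_iSup_eq _ (fun i => isThresholdGraph_edgesWithMinIn htrans (hf i))
    (iSup_edgesWithMinIn_fiber G f)

end MinEndpoint

theorem exists_isClique_fiber_and_isStableSet_card_eq [Fintype V] {β : Type*} [PartialOrder β]
    (G : SimpleGraph V) (φ : V → β) (hφ : Function.Injective φ)
    (hadj : ∀ x y, x ≠ y → (G.Adj x y ↔ ¬ φ x ≤ φ y ∧ ¬ φ y ≤ φ x)) :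
    ∃ (k : ℕ) (f : V → Fin k) (s : Finset V),
      (∀ i, G.IsClique (f ⁻¹' {i})) ∧ IsStableSet G ↑s ∧ #s = k := by
  let := PartialOrder.lift φ hφ
  obtain ⟨k, f, s, hf, hs, hsk⟩ := exists_strictMono_fin_and_isChain_card_eq V
  refine ⟨k, f, s, fun i x hx y hy hxy => (hadj x y hxy).mpr ⟨fun h => ?_, fun h => ?_⟩,
    fun x hx y hy hxy h => ?_, hsk⟩
  · exact (hf (lt_of_le_of_ne h hxy)).ne (hx.trans hy.symm)
  · exact (hf (lt_of_le_of_ne h hxy.symm)).ne (hy.trans hx.symm)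
  · obtain ⟨hxy', hyx'⟩ := (hadj x y hxy).mp h
    exact (hs hx hy hxy).elim hxy' hyx'

end SimpleGraph

section Permutation

variable {n : ℕ} (π : Equiv.Perm (Fin n))

theorem permGraph_adj_iff {x y : Fin n} :
    (permGraph n π).Adj x y ↔ x < y ∧ π.symm y < π.symm x ∨ y < x ∧ π.symm x < π.symm y := by
  simp only [permGraph, Fin.lt_def, mul_neg_iff]
  omega

theorem permGraph_adj_trans ⦃x y z : Fin n⦄ (hxy : x < y) (hyz : y < z)
    (h₁ : (permGraph n π).Adj x y) (h₂ : (permGraph n π).Adj y z) : (permGraph n π).Adj x z := by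
  rw [permGraph_adj_iff] at *
  grind

theorem permGraph_adj_iff_incomparable {x y : Fin n} (hxy : x ≠ y) :
    (permGraph n π).Adj x y ↔
      ¬ (x, π.symm x) ≤ (y, π.symm y) ∧ ¬ (y, π.symm y) ≤ (x, π.symm x) := by
  have : π.symm x ≠ π.symm y := π.symm.injective.ne hxy
  simp only [permGraph_adj_iff, Prod.mk_le_mk, not_and_or, not_le]
  grind

end Permutation

/-- Theorem 6: if `G` is a permutation graph on `n` vertices then `t(G) ≤ n / 2`,
i.e. `2 * t(G) ≤ n`. -/
theorem two_mul_thresholdDim_le_card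
    {V : Type*} [Fintype V] (G : SimpleGraph V)
    (hG : IsPermutationGraph G) :
    2 * thresholdDim G ≤ Fintype.card V := by
  obtain ⟨n, π, ⟨e⟩⟩ := hG
  obtain ⟨k, f, S, hf, hS, hSk⟩ := (permGraph n π).exists_isClique_fiber_and_isStableSet_card_eq
    (fun x => (x, π.symm x)) (fun x y h => congrArg Prod.fst h)
    fun x y => permGraph_adj_iff_incomparable π
  have hiso := SimpleGraph.thresholdDim_le_of_iso e
  have hcliques := SimpleGraph.thresholdDim_le_card_of_isClique_fiber (permGraph_adj_trans π) f hf
  have hstars := SimpleGraph.thresholdDim_le_card_sub_card S hS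
  rw [Fintype.card_fin] at hcliques hstars
  rw [Fintype.card_congr e.toEquiv, Fintype.card_fin]
  omega
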